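/- arXiv:1908.04750 — 2 statements merged into one kernel-verified Lean document; each statement's English description precedes it below -/
import Mathlib

section
/- Let X₀ ⊆ ℝⁿ, X̃₀ = Λ_{η_x} ∩ X₀, and R(ε) = {(x̃,x) ∈ Λ_{η_x} × ℝⁿ : ‖x̃ − x‖ ≤ ε}. Then R(ε) is a strong ε-approximate alternating simulation relation from the symbolic model to the system, namely: (D1) for every x̃₀ ∈ X̃₀ there exists x₀ ∈ X₀ with (x̃₀, x₀) ∈ R(ε); (D2) every (x̃,x) ∈ R(ε) satisfies ‖x̃ − x‖ ≤ ε; and (D3) for every (x̃,x) ∈ R(ε), every ũ ∈ Ũ and every m ∈ {1,…,M_max}, there exist grid points x̃₁, …, x̃_m ∈ Λ_{η_x} such that for every p ∈ {1,…,m}: x̃_p ∈ G̃(x̃,ũ,p) and ‖x̃_p − φ(x,ũ,p)‖ ≤ ε. (Lemma 2 of the paper.) -/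
/-!
Rounding every coordinate to the nearest multiple of `2η/√n` moves a point of `ℝⁿ` by at most
`√n · η/√n = η`, so `Λ_η` is an `η`-net. For (D3) take `x̃_p` to be a grid point within
`η_x ≤ ε` of the true trajectory `φ(x,ũ,p)`; since `φ(·,ũ,p)` is `Lᵖ`-Lipschitz and
`‖x̃ − x‖ ≤ ε`, it lies within `Lᵖ ε + η_x` of the symbolic trajectory `φ(x̃,ũ,p)`.
-/

/-- The Euclidean state space ℝⁿ. -/
abbrev Euc (n : ℕ) := EuclideanSpace ℝ (Fin n)

/-- `phi f x u m` is the state reached from `x` by applying the input `u`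
constantly for `m` time steps, i.e. the `m`-fold iterate of `y ↦ f y u` at `x`. -/
def phi {n nu : ℕ} (f : Euc n → Euc nu → Euc n) (x : Euc n) (u : Euc nu) (m : ℕ) : Euc n :=
  (fun y => f y u)^[m] x

/-- The grid `Λ_η ⊆ ℝⁿ`: points whose coordinates are integer multiples of `2η/√n`. -/
def grid (n : ℕ) (η : ℝ) : Set (Euc n) :=
  { y | ∀ i : Fin n, ∃ a : ℤ, y i = (2 * η / Real.sqrt n) * (a : ℝ) }

/-- Symbolic transition map: `G̃(x̃,ũ,m) = { x̃⁺ ∈ Λ_{η_x} : ‖x̃⁺ − φ(x̃,ũ,m)‖ ≤ Lᵐ ε + η_x }`. -/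
def Gt {n nu : ℕ} (f : Euc n → Euc nu → Euc n) (L ε ηx : ℝ)
    (xt : Euc n) (ut : Euc nu) (m : ℕ) : Set (Euc n) :=
  { x' | x' ∈ grid n ηx ∧ ‖x' - phi f xt ut m‖ ≤ L ^ m * ε + ηx }

/-- The relation `R(ε) = {(x̃,x) ∈ Λ_{η_x} × ℝⁿ : ‖x̃ − x‖ ≤ ε}`. -/
def RelEps (n : ℕ) (ηx ε : ℝ) : Set (Euc n × Euc n) :=
  { q | q.1 ∈ grid n ηx ∧ ‖q.1 - q.2‖ ≤ ε }

theorem abs_mul_round_div_sub_le {c : ℝ} (hc : 0 < c) (t : ℝ) :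
    |c * round (t / c) - t| ≤ c / 2 := by
  calc |c * round (t / c) - t| = c * |t / c - round (t / c)| := by
        rw [← abs_of_pos hc, ← abs_mul, abs_sub_comm, abs_of_pos hc, mul_sub,
          mul_div_cancel₀ t hc.ne']
    _ ≤ c * (1 / 2) := by gcongr; exact abs_sub_round _
    _ = c / 2 := by ring

theorem EuclideanSpace.norm_le_sqrt_card_mul {ι : Type*} [Fintype ι]
    {x : EuclideanSpace ℝ ι} {δ : ℝ} (hδ : 0 ≤ δ) (hx : ∀ i, |x i| ≤ δ) :
    ‖x‖ ≤ √(Fintype.card ι) * δ := by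
  calc ‖x‖ = √(∑ i, |x i| ^ 2) := by simp only [EuclideanSpace.norm_eq, Real.norm_eq_abs]
    _ ≤ √(∑ _i : ι, δ ^ 2) := by gcongr with i; exact hx i
    _ = √(Fintype.card ι) * δ := by
        rw [Finset.sum_const, Finset.card_univ, nsmul_eq_mul, Real.sqrt_mul (Nat.cast_nonneg _),
          Real.sqrt_sq hδ]

theorem exists_mem_grid_norm_sub_le {n : ℕ} {η : ℝ} (hη : 0 < η) (x : Euc n) :
    ∃ g ∈ grid n η, ‖g - x‖ ≤ η := by
  set c := 2 * η / √n
  refine ⟨WithLp.toLp 2 fun i => c * round (x i / c), fun i => ⟨round (x i / c), rfl⟩, ?_⟩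
  calc _ ≤ √(Fintype.card (Fin n)) * (c / 2) := by
        refine EuclideanSpace.norm_le_sqrt_card_mul (by positivity) fun i => ?_
        -- a coordinate exists, so `n > 0` and the spacing `c` is positive
        have : 0 < (n : ℝ) := by exact_mod_cast i.pos
        exact abs_mul_round_div_sub_le (by positivity) (x i)
    _ ≤ η := by
        rw [Fintype.card_fin]
        rcases n.eq_zero_or_pos with rfl | hn
        · simpa using hη.le
        · have : 0 < √n := Real.sqrt_pos.2 (by exact_mod_cast hn)
          exact (by simp only [c]; field_simp : √n * (c / 2) = η).le

theorem norm_phi_sub_phi_le {n nu : ℕ} {f : Euc n → Euc nu → Euc n} {u : Euc nu} {L : ℝ}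
    (hL : 0 ≤ L) (hf : ∀ x₁ x₂ : Euc n, ‖f x₁ u - f x₂ u‖ ≤ L * ‖x₁ - x₂‖)
    (x₁ x₂ : Euc n) (m : ℕ) :
    ‖phi f x₁ u m - phi f x₂ u m‖ ≤ L ^ m * ‖x₁ - x₂‖ := by
  have hlip : LipschitzWith L.toNNReal fun y => f y u :=
    LipschitzWith.of_dist_le_mul fun x₁ x₂ => by
      rw [dist_eq_norm, dist_eq_norm, Real.coe_toNNReal L hL]
      exact hf x₁ x₂
  have := (hlip.iterate m).dist_le_mul x₁ x₂
  rwa [NNReal.coe_pow, Real.coe_toNNReal L hL, dist_eq_norm, dist_eq_norm] at this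

theorem mem_Gt_of_norm_sub_phi_le {n nu : ℕ} {f : Euc n → Euc nu → Euc n} {u : Euc nu}
    {L ε ηx : ℝ} (hL : 0 ≤ L) (hf : ∀ x₁ x₂ : Euc n, ‖f x₁ u - f x₂ u‖ ≤ L * ‖x₁ - x₂‖)
    {xt x g : Euc n} (hxt : ‖xt - x‖ ≤ ε) {m : ℕ} (hg : g ∈ grid n ηx)
    (hgx : ‖g - phi f x u m‖ ≤ ηx) :
    g ∈ Gt f L ε ηx xt u m := by
  refine ⟨hg, ?_⟩
  calc ‖g - phi f xt u m‖ ≤ ‖g - phi f x u m‖ + ‖phi f x u m - phi f xt u m‖ :=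
        norm_sub_le_norm_sub_add_norm_sub _ _ _
    _ ≤ ηx + L ^ m * ‖x - xt‖ := add_le_add hgx (norm_phi_sub_phi_le hL hf x xt m)
    _ ≤ L ^ m * ε + ηx := by
        rw [add_comm, norm_sub_rev]
        gcongr

theorem strong_eps_ASR_general {n nu : ℕ}
    (U : Set (Euc nu)) (f : Euc n → Euc nu → Euc n) (L : ℝ) (hL : 0 ≤ L)
    (hf : ∀ x₁ x₂ : Euc n, ∀ u ∈ U, ‖f x₁ u - f x₂ u‖ ≤ L * ‖x₁ - x₂‖)
    (ηx ηu : ℝ) (hηx : 0 < ηx)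
    (ε : ℝ) (hε : ηx ≤ ε) (Mmax : ℕ)
    (X₀ : Set (Euc n)) :
    -- (D1): every initial symbolic state `x̃₀ ∈ X̃₀ = Λ_{η_x} ∩ X₀` is related to
    -- some initial state `x₀ ∈ X₀`
    (∀ xt0 ∈ grid n ηx ∩ X₀, ∃ x0 ∈ X₀, (xt0, x0) ∈ RelEps n ηx ε) ∧
    -- (D2): related states are `ε`-close
    (∀ q ∈ RelEps n ηx ε, ‖q.1 - q.2‖ ≤ ε) ∧
    -- (D3): for every related pair, every symbolic input `ũ ∈ Ũ = Λ_{η_u} ∩ U` and every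
    -- `m ∈ {1,…,M_max}`, there are grid points `x̃₁,…,x̃_m` with `x̃_p ∈ G̃(x̃,ũ,p)` and
    -- `‖x̃_p − φ(x,ũ,p)‖ ≤ ε` for every `p ∈ {1,…,m}`
    (∀ q ∈ RelEps n ηx ε, ∀ ut ∈ grid nu ηu ∩ U, ∀ m : ℕ, 1 ≤ m → m ≤ Mmax →
      ∃ xs : ℕ → Euc n, ∀ p : ℕ, 1 ≤ p → p ≤ m →
        xs p ∈ Gt f L ε ηx q.1 ut p ∧ ‖xs p - phi f q.2 ut p‖ ≤ ε) := by
  refine ⟨fun xt0 hxt0 => ⟨xt0, hxt0.2, hxt0.1, by simpa using hηx.le.trans hε⟩,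
    fun q hq => hq.2, ?_⟩
  rintro ⟨xt, x⟩ ⟨-, hclose⟩ ut ⟨-, hut⟩ m - -
  choose xs hxs_grid hxs_near using fun p => exists_mem_grid_norm_sub_le hηx (phi f x ut p)
  exact ⟨xs, fun p _ _ =>
    ⟨mem_Gt_of_norm_sub_phi_le hL (fun x₁ x₂ => hf x₁ x₂ ut hut) hclose (hxs_grid p) (hxs_near p),
      (hxs_near p).trans hε⟩⟩

/-- Lemma 2: `R(ε)` is a strong `ε`-approximate alternating simulation relation
from the symbolic model to the system, i.e. conditions (D1), (D2) and (D3) hold. -/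
theorem strong_eps_ASR {n nu : ℕ} (hn : 1 ≤ n)
    (U : Set (Euc nu)) (f : Euc n → Euc nu → Euc n) (L : ℝ) (hL : 0 ≤ L)
    (hf : ∀ x₁ x₂ : Euc n, ∀ u ∈ U, ‖f x₁ u - f x₂ u‖ ≤ L * ‖x₁ - x₂‖)
    (ηx ηu : ℝ) (hηx : 0 < ηx) (hηu : 0 < ηu)
    (ε : ℝ) (hε : ηx ≤ ε) (Mmax : ℕ) (hM : 1 ≤ Mmax)
    (X₀ : Set (Euc n)) :
    -- (D1): every initial symbolic state `x̃₀ ∈ X̃₀ = Λ_{η_x} ∩ X₀` is related to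
    -- some initial state `x₀ ∈ X₀`
    (∀ xt0 ∈ grid n ηx ∩ X₀, ∃ x0 ∈ X₀, (xt0, x0) ∈ RelEps n ηx ε) ∧
    -- (D2): related states are `ε`-close
    (∀ q ∈ RelEps n ηx ε, ‖q.1 - q.2‖ ≤ ε) ∧
    -- (D3): for every related pair, every symbolic input `ũ ∈ Ũ = Λ_{η_u} ∩ U` and every
    -- `m ∈ {1,…,M_max}`, there are grid points `x̃₁,…,x̃_m` with `x̃_p ∈ G̃(x̃,ũ,p)` and
    -- `‖x̃_p − φ(x,ũ,p)‖ ≤ ε` for every `p ∈ {1,…,m}`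
    (∀ q ∈ RelEps n ηx ε, ∀ ut ∈ grid nu ηu ∩ U, ∀ m : ℕ, 1 ≤ m → m ≤ Mmax →
      ∃ xs : ℕ → Euc n, ∀ p : ℕ, 1 ≤ p → p ≤ m →
        xs p ∈ Gt f L ε ηx q.1 ut p ∧ ‖xs p - phi f q.2 ut p‖ ≤ ε) :=
  strong_eps_ASR_general U f L hL hf ηx ηu hηx ε hε Mmax X₀
end

section
/- Suppose X_F ⊆ X_S and let x̃₀ ∈ Λ_{η_x} with ℒ(x̃₀) = N < ∞. Then along every controlled trajectory of the symbolic model induced by C̃ starting from x̃₀: (i) the rank strictly decreases at communication times, i.e., ℒ(x̃_{k_{ℓ+1}}) < ℒ(x̃_{k_ℓ}) for every executed round ℓ; (ii) every visited state lies in X̃_S; and (iii) every maximal such trajectory reaches the target grid set within at most N communication rounds: there exists ℓ* ≤ N with x̃_{k_{ℓ*}} ∈ X̃_F and x̃_k ∈ X̃_S for all k ∈ {0,…,k_{ℓ*}}. (Lemma 3 of the paper: the controller C̃ is valid for the symbolic model with specification (X̃_S, X̃_F) whenever the initial states lie in P̃_S = ⋃ₙ P⁽ⁿ⁾.) -/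
/-- `Int_ε(A)`: points of `A` whose closed `ε`-ball is contained in `A`. -/
def IntEps {n : ℕ} (ε : ℝ) (A : Set (Euc n)) : Set (Euc n) :=
  { x ∈ A | Metric.closedBall x ε ⊆ A }

/-- The predecessor map `Pre(P)` of the reachability game. -/
def Pre {n nu : ℕ} (f : Euc n → Euc nu → Euc n) (L ε ηx : ℝ)
    (Ut : Set (Euc nu)) (Mmax : ℕ) (XtS : Set (Euc n)) (P : Set (Euc n)) : Set (Euc n) :=
  { xt ∈ XtS | ∃ ut ∈ Ut, ∃ m : ℕ, 1 ≤ m ∧ m ≤ Mmax ∧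
      Gt f L ε ηx xt ut m ⊆ P ∧ ∀ p : ℕ, 1 ≤ p → p ≤ m → Gt f L ε ηx xt ut p ⊆ XtS }

/-- The iteration `P⁽⁰⁾ = X̃_F`, `P⁽ⁿ⁺¹⁾ = P⁽ⁿ⁾ ∪ Pre(P⁽ⁿ⁾)` of Algorithm 1. -/
def Pseq {n nu : ℕ} (f : Euc n → Euc nu → Euc n) (L ε ηx : ℝ)
    (Ut : Set (Euc nu)) (Mmax : ℕ) (XtS XtF : Set (Euc n)) : ℕ → Set (Euc n)
  | 0 => XtF
  | k + 1 => Pseq f L ε ηx Ut Mmax XtS XtF k ∪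
      Pre f L ε ηx Ut Mmax XtS (Pseq f L ε ηx Ut Mmax XtS XtF k)

/-- The rank `ℒ(x̃) ∈ ℕ ∪ {∞}` : the least `k` with `x̃ ∈ P⁽ᵏ⁾` (and `∞` if there is none). -/
noncomputable def rankL {n nu : ℕ} (f : Euc n → Euc nu → Euc n) (L ε ηx : ℝ)
    (Ut : Set (Euc nu)) (Mmax : ℕ) (XtS XtF : Set (Euc n)) (xt : Euc n) : ℕ∞ :=
  sInf ((fun k : ℕ => (k : ℕ∞)) '' { k : ℕ | xt ∈ Pseq f L ε ηx Ut Mmax XtS XtF k })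

/-- The symbolic controller `C̃`. -/
def Ct {n nu : ℕ} (f : Euc n → Euc nu → Euc n) (L ε ηx : ℝ)
    (Ut : Set (Euc nu)) (Mmax : ℕ) (XtS XtF : Set (Euc n)) (xt : Euc n) :
    Set (Euc nu × ℕ) :=
  { um | um.1 ∈ Ut ∧ 1 ≤ um.2 ∧ um.2 ≤ Mmax ∧
      (∀ x' ∈ Gt f L ε ηx xt um.1 um.2,
        rankL f L ε ηx Ut Mmax XtS XtF x' < rankL f L ε ηx Ut Mmax XtS XtF xt) ∧
      ∀ p : ℕ, 1 ≤ p → p ≤ um.2 → Gt f L ε ηx xt um.1 p ⊆ XtS }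

theorem IntEps_mono {n : ℕ} {ε : ℝ} {A B : Set (Euc n)} (h : A ⊆ B) :
    IntEps ε A ⊆ IntEps ε B :=
  fun _ hx => ⟨h hx.1, hx.2.trans h⟩

theorem mem_of_le_commTime {α : Type*} {S : Set α} {xt : ℕ → α} {kt ms : ℕ → ℕ} {R : ℕ∞}
    (h0 : xt 0 ∈ S) (hk0 : kt 0 = 0)
    (hround : ∀ ℓ : ℕ, (ℓ : ℕ∞) < R →
      kt (ℓ + 1) = kt ℓ + ms ℓ ∧ ∀ p : ℕ, 1 ≤ p → p ≤ ms ℓ → xt (kt ℓ + p) ∈ S) :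
    ∀ ℓ : ℕ, (ℓ : ℕ∞) ≤ R → ∀ k ≤ kt ℓ, xt k ∈ S := by
  intro ℓ
  induction ℓ with
  | zero =>
    intro _ k hk
    rw [hk0, Nat.le_zero] at hk
    exact hk ▸ h0
  | succ ℓ ih =>
    intro hℓ k hk
    have hlt : (ℓ : ℕ∞) < R := lt_of_lt_of_le (by exact_mod_cast ℓ.lt_succ_self) hℓ
    obtain ⟨hkt, hmem⟩ := hround ℓ hlt
    rcases le_or_gt k (kt ℓ) with hle | hgt
    · exact ih hlt.le k hle
    · obtain ⟨p, rfl⟩ := Nat.exists_eq_add_of_lt hgt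
      exact hmem (p + 1) le_add_self (by omega)

theorem exists_eq_zero_of_lt_of_stop {r : ℕ → ℕ∞} {R : ℕ∞}
    (hdec : ∀ ℓ : ℕ, (ℓ : ℕ∞) < R → r (ℓ + 1) < r ℓ)
    (hstop : ∀ ℓ : ℕ, (ℓ : ℕ∞) = R → r ℓ = 0 ∨ r ℓ = ⊤) (j : ℕ) :
    ∀ ℓ : ℕ, (ℓ : ℕ∞) ≤ R → r ℓ ≤ j →
      ∃ ls, ℓ ≤ ls ∧ ls ≤ ℓ + j ∧ (ls : ℕ∞) ≤ R ∧ r ls = 0 := by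
  induction j with
  | zero => exact fun ℓ hℓ hr => ⟨ℓ, le_rfl, le_rfl, hℓ, by simpa using hr⟩
  | succ j ih =>
    intro ℓ hℓ hr
    by_cases hr0 : r ℓ = 0
    · exact ⟨ℓ, le_rfl, by omega, hℓ, hr0⟩
    have hlt : (ℓ : ℕ∞) < R := by
      refine lt_of_le_of_ne hℓ fun hR => ?_
      rcases hstop ℓ hR with h | h
      · exact hr0 h
      · exact ENat.natCast_ne_top _ (top_le_iff.1 (h ▸ hr))
    have hr' : r (ℓ + 1) ≤ j :=
      ENat.lt_natCast_add_one_iff.1 (by exact_mod_cast (hdec ℓ hlt).trans_le hr)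
    obtain ⟨ls, h1, h2, hlsR, hls⟩ :=
      ih (ℓ + 1) (by exact_mod_cast Order.add_one_le_of_lt hlt) hr'
    exact ⟨ls, by omega, by omega, hlsR, hls⟩

section Ranks

variable {n nu : ℕ} {f : Euc n → Euc nu → Euc n} {L ε ηx : ℝ}
  {Ut : Set (Euc nu)} {Mmax : ℕ} {XtS XtF : Set (Euc n)} {x : Euc n}

theorem Pseq_mono : Monotone (Pseq f L ε ηx Ut Mmax XtS XtF) :=
  monotone_nat_of_le_succ fun _ => Set.subset_union_left

theorem Pseq_subset (hFS : XtF ⊆ XtS) (k : ℕ) : Pseq f L ε ηx Ut Mmax XtS XtF k ⊆ XtS := by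
  induction k with
  | zero => exact hFS
  | succ k ih => exact Set.union_subset ih fun _ hx => hx.1

theorem mem_Pseq_iff_rankL_le {k : ℕ} :
    x ∈ Pseq f L ε ηx Ut Mmax XtS XtF k ↔ rankL f L ε ηx Ut Mmax XtS XtF x ≤ k := by
  refine ⟨fun hx => sInf_le ⟨k, hx, rfl⟩, fun h => ?_⟩
  have hne : ((fun k : ℕ => (k : ℕ∞)) ''
      { k : ℕ | x ∈ Pseq f L ε ηx Ut Mmax XtS XtF k }).Nonempty :=
    Set.nonempty_iff_ne_empty.2 fun hemp => by simp [rankL, hemp] at h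
  obtain ⟨j, hj, hjr⟩ := csInf_mem hne
  have hjk : (j : ℕ∞) ≤ k := hjr.trans_le h
  exact Pseq_mono (by exact_mod_cast hjk) hj

theorem mem_of_rankL_eq_zero (h : rankL f L ε ηx Ut Mmax XtS XtF x = 0) : x ∈ XtF := by
  show x ∈ Pseq f L ε ηx Ut Mmax XtS XtF 0
  exact mem_Pseq_iff_rankL_le.2 (by simp [h])

theorem mem_of_rankL_ne_top (hFS : XtF ⊆ XtS) (h : rankL f L ε ηx Ut Mmax XtS XtF x ≠ ⊤) :
    x ∈ XtS := by
  obtain ⟨k, hk⟩ := ENat.ne_top_iff_exists.1 h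
  exact Pseq_subset hFS k (mem_Pseq_iff_rankL_le.2 hk.ge)

theorem Ct_nonempty_of_rankL_eq_succ {k : ℕ}
    (hr : rankL f L ε ηx Ut Mmax XtS XtF x = (k + 1 : ℕ)) :
    (Ct f L ε ηx Ut Mmax XtS XtF x).Nonempty := by
  have hmem : x ∈ Pseq f L ε ηx Ut Mmax XtS XtF (k + 1) := mem_Pseq_iff_rankL_le.2 hr.le
  have hnot : x ∉ Pseq f L ε ηx Ut Mmax XtS XtF k := fun hx => by
    have := mem_Pseq_iff_rankL_le.1 hx
    rw [hr] at this
    norm_cast at this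
    omega
  rcases hmem with hx | ⟨-, ut, hut, m, hm1, hmM, hsub, hsafe⟩
  · exact absurd hx hnot
  refine ⟨(ut, m), hut, hm1, hmM, fun x' hx' => ?_, hsafe⟩
  calc rankL f L ε ηx Ut Mmax XtS XtF x' ≤ k := mem_Pseq_iff_rankL_le.1 (hsub hx')
    _ < rankL f L ε ηx Ut Mmax XtS XtF x := by rw [hr]; exact_mod_cast k.lt_succ_self

theorem rankL_eq_zero_or_eq_top_of_Ct_eq_empty (h : Ct f L ε ηx Ut Mmax XtS XtF x = ∅) :
    rankL f L ε ηx Ut Mmax XtS XtF x = 0 ∨ rankL f L ε ηx Ut Mmax XtS XtF x = ⊤ := by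
  by_contra! hr
  obtain ⟨j, hj⟩ := ENat.ne_top_iff_exists.1 hr.2
  obtain ⟨k, rfl⟩ := Nat.exists_eq_succ_of_ne_zero (n := j) fun hj0 => hr.1 (by simp [← hj, hj0])
  exact (Ct_nonempty_of_rankL_eq_succ hj.symm).ne_empty h

end Ranks

theorem symbolic_controller_valid_general {n nu : ℕ}
    (f : Euc n → Euc nu → Euc n) (L : ℝ)
    (ηx : ℝ)
    (ε : ℝ) (Mmax : ℕ)
    (XS XF : Set (Euc n)) (hFS : XF ⊆ XS)
    (Ut : Set (Euc nu))
    (XtS : Set (Euc n)) (hXtS : XtS = grid n ηx ∩ IntEps ε XS)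
    (XtF : Set (Euc n)) (hXtF : XtF = grid n ηx ∩ IntEps ε XF)
    -- the initial symbolic state, of finite rank `ℒ(x̃₀) = N`
    (xt0 : Euc n)
    (N : ℕ) (hrank : rankL f L ε ηx Ut Mmax XtS XtF xt0 = (N : ℕ∞))
    -- a maximal controlled trajectory of the symbolic model induced by `C̃`
    (kt : ℕ → ℕ) (hk0 : kt 0 = 0)
    (xt : ℕ → Euc n) (hx0 : xt 0 = xt0)
    (u : ℕ → Euc nu) (ms : ℕ → ℕ)
    (numRounds : ℕ∞)
    (hstep : ∀ ℓ : ℕ, (ℓ : ℕ∞) < numRounds →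
      (u ℓ, ms ℓ) ∈ Ct f L ε ηx Ut Mmax XtS XtF (xt (kt ℓ)) ∧
      kt (ℓ + 1) = kt ℓ + ms ℓ ∧
      ∀ p : ℕ, 1 ≤ p → p ≤ ms ℓ → xt (kt ℓ + p) ∈ Gt f L ε ηx (xt (kt ℓ)) (u ℓ) p)
    (hmax : ∀ ℓ : ℕ, (ℓ : ℕ∞) = numRounds →
      Ct f L ε ηx Ut Mmax XtS XtF (xt (kt ℓ)) = ∅) :
    -- (i) the rank strictly decreases at communication times
    (∀ ℓ : ℕ, (ℓ : ℕ∞) < numRounds →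
      rankL f L ε ηx Ut Mmax XtS XtF (xt (kt (ℓ + 1))) <
        rankL f L ε ηx Ut Mmax XtS XtF (xt (kt ℓ))) ∧
    -- (ii) every visited state lies in `X̃_S`
    (xt 0 ∈ XtS ∧ ∀ ℓ : ℕ, (ℓ : ℕ∞) < numRounds →
      ∀ k : ℕ, k ≤ kt (ℓ + 1) → xt k ∈ XtS) ∧
    -- (iii) the trajectory reaches `X̃_F` within at most `N` communication rounds
    (∃ ls : ℕ, ls ≤ N ∧ (ls : ℕ∞) ≤ numRounds ∧ xt (kt ls) ∈ XtF ∧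
      ∀ k : ℕ, k ≤ kt ls → xt k ∈ XtS) := by
  have hFtS : XtF ⊆ XtS := hXtF ▸ hXtS ▸ Set.inter_subset_inter_right _ (IntEps_mono hFS)
  have hx0S : xt 0 ∈ XtS :=
    mem_of_rankL_ne_top hFtS (by rw [hx0, hrank]; exact ENat.natCast_ne_top N)
  have hdec : ∀ ℓ : ℕ, (ℓ : ℕ∞) < numRounds →
      rankL f L ε ηx Ut Mmax XtS XtF (xt (kt (ℓ + 1))) <
        rankL f L ε ηx Ut Mmax XtS XtF (xt (kt ℓ)) := fun ℓ hℓ => by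
    obtain ⟨hC, hkt, hG⟩ := hstep ℓ hℓ
    exact hC.2.2.2.1 _ (hkt ▸ hG _ hC.2.1 le_rfl)
  have hsafe := mem_of_le_commTime hx0S hk0 fun ℓ hℓ =>
    let ⟨hC, hkt, hG⟩ := hstep ℓ hℓ
    ⟨hkt, fun p hp1 hpm => hC.2.2.2.2 p hp1 hpm (hG p hp1 hpm)⟩
  obtain ⟨ls, -, hlsN, hlsR, hls0⟩ := exists_eq_zero_of_lt_of_stop hdec
    (fun ℓ hℓ => rankL_eq_zero_or_eq_top_of_Ct_eq_empty (hmax ℓ hℓ)) N 0 bot_le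
    (by rw [hk0, hx0, hrank])
  exact ⟨hdec, ⟨hx0S, fun ℓ hℓ => hsafe (ℓ + 1) (by exact_mod_cast Order.add_one_le_of_lt hℓ)⟩,
    ls, by omega, hlsR, mem_of_rankL_eq_zero hls0, hsafe ls hlsR⟩

/-- Lemma 3: validity of the symbolic controller `C̃`. Along every maximal controlled
trajectory of the symbolic model induced by `C̃` starting from a state `x̃₀` of finite
rank `N`: (i) the rank strictly decreases at communication times; (ii) every visited
state lies in `X̃_S`; (iii) the trajectory reaches `X̃_F` within at most `N` rounds
while remaining in `X̃_S`. A trajectory has communication times `k₀ = 0`,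
`k_{ℓ+1} = k_ℓ + m_ℓ` with `(ũ_ℓ, m_ℓ) ∈ C̃(x̃_{k_ℓ})` and
`x̃_{k_ℓ+p} ∈ G̃(x̃_{k_ℓ}, ũ_ℓ, p)` for `p ∈ {1,…,m_ℓ}`, executed for all rounds
`ℓ < numRounds ∈ ℕ∞`; maximality means it is infinite or stops only where `C̃ = ∅`. -/
theorem symbolic_controller_valid {n nu : ℕ} (hn : 1 ≤ n)
    (U : Set (Euc nu)) (f : Euc n → Euc nu → Euc n) (L : ℝ) (hL : 0 ≤ L)
    (hf : ∀ x₁ x₂ : Euc n, ∀ u ∈ U, ‖f x₁ u - f x₂ u‖ ≤ L * ‖x₁ - x₂‖)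
    (ηx ηu : ℝ) (hηx : 0 < ηx) (hηu : 0 < ηu)
    (ε : ℝ) (hε : ηx ≤ ε) (Mmax : ℕ) (hM : 1 ≤ Mmax)
    (XS XF : Set (Euc n)) (hFS : XF ⊆ XS)
    (Ut : Set (Euc nu)) (hUt : Ut = grid nu ηu ∩ U)
    (XtS : Set (Euc n)) (hXtS : XtS = grid n ηx ∩ IntEps ε XS)
    (XtF : Set (Euc n)) (hXtF : XtF = grid n ηx ∩ IntEps ε XF)
    -- the initial symbolic state, of finite rank `ℒ(x̃₀) = N`
    (xt0 : Euc n) (hxt0 : xt0 ∈ grid n ηx)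
    (N : ℕ) (hrank : rankL f L ε ηx Ut Mmax XtS XtF xt0 = (N : ℕ∞))
    -- a maximal controlled trajectory of the symbolic model induced by `C̃`
    (kt : ℕ → ℕ) (hk0 : kt 0 = 0)
    (xt : ℕ → Euc n) (hx0 : xt 0 = xt0)
    (u : ℕ → Euc nu) (ms : ℕ → ℕ)
    (numRounds : ℕ∞)
    (hstep : ∀ ℓ : ℕ, (ℓ : ℕ∞) < numRounds →
      (u ℓ, ms ℓ) ∈ Ct f L ε ηx Ut Mmax XtS XtF (xt (kt ℓ)) ∧
      kt (ℓ + 1) = kt ℓ + ms ℓ ∧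
      ∀ p : ℕ, 1 ≤ p → p ≤ ms ℓ → xt (kt ℓ + p) ∈ Gt f L ε ηx (xt (kt ℓ)) (u ℓ) p)
    (hmax : ∀ ℓ : ℕ, (ℓ : ℕ∞) = numRounds →
      Ct f L ε ηx Ut Mmax XtS XtF (xt (kt ℓ)) = ∅) :
    -- (i) the rank strictly decreases at communication times
    (∀ ℓ : ℕ, (ℓ : ℕ∞) < numRounds →
      rankL f L ε ηx Ut Mmax XtS XtF (xt (kt (ℓ + 1))) <
        rankL f L ε ηx Ut Mmax XtS XtF (xt (kt ℓ))) ∧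
    -- (ii) every visited state lies in `X̃_S`
    (xt 0 ∈ XtS ∧ ∀ ℓ : ℕ, (ℓ : ℕ∞) < numRounds →
      ∀ k : ℕ, k ≤ kt (ℓ + 1) → xt k ∈ XtS) ∧
    -- (iii) the trajectory reaches `X̃_F` within at most `N` communication rounds
    (∃ ls : ℕ, ls ≤ N ∧ (ls : ℕ∞) ≤ numRounds ∧ xt (kt ls) ∈ XtF ∧
      ∀ k : ℕ, k ≤ kt ls → xt k ∈ XtS) :=
  symbolic_controller_valid_general f L ηx ε Mmax XS XF hFS Ut XtS hXtS XtF hXtF xt0 N hrank kt hk0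
    xt hx0 u ms numRounds hstep hmax
end
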